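/- arXiv:1204.0982 — 7 statements merged into one kernel-verified Lean document; each statement's English description precedes it below -/
import Mathlib

section
/- Let G = (V,E) be a finite simple graph and let x be an optimal half-integral fractional vertex cover of G. Let L = {v ∈ V : deg(v) = 1, or deg(v) = 2 and x(v) = 1/2}, let V' = L ∪ N(L), and let V* = ⋃_{v : deg(v) ∈ {1,2}} ({v} ∪ N(v)). Then there exists a vertex cover C of G, with indicator function y : V → {0,1}, such that (i) every u ∈ V' with deg(u) ≥ 3 belongs to C, (ii) ∑_{v ∈ V*} y(v) ≤ (3/2)·∑_{v ∈ V*} x(v), and (iii) ∑_{v ∈ V∖V*} y(v) ≤ 2·∑_{v ∈ V∖V*} x(v). -/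
/-- `x : V → ℝ` is a fractional vertex cover of `G`. -/
def IsFractionalVC {V : Type*} (G : SimpleGraph V) (x : V → ℝ) : Prop :=
  (∀ v, 0 ≤ x v) ∧ (∀ u v, G.Adj u v → 1 ≤ x u + x v)

/-- `x` is an optimal fractional vertex cover of `G`. -/
def IsOptimalFVC {V : Type*} [Fintype V] (G : SimpleGraph V) (x : V → ℝ) : Prop :=
  IsFractionalVC G x ∧ ∀ x' : V → ℝ, IsFractionalVC G x' → ∑ v, x v ≤ ∑ v, x' v

/-- `x` is half-integral. -/
def IsHalfIntegral {V : Type*} (x : V → ℝ) : Prop :=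
  ∀ v, x v = 0 ∨ x v = 1 / 2 ∨ x v = 1

/-- `C` is a vertex cover of `G`. -/
def IsVertexCover {V : Type*} (G : SimpleGraph V) (C : Set V) : Prop :=
  ∀ u v, G.Adj u v → u ∈ C ∨ v ∈ C


section helpers
set_option linter.unusedSectionVars false
variable {V : Type*} [Fintype V] [DecidableEq V] (G : SimpleGraph V) [DecidableRel G.Adj]
  {x : V → ℝ}

lemma pendant_unique {v u w : V} (hd : G.degree v = 1) (hu : G.Adj v u) (hw : G.Adj v w) :
    w = u := by
  rw [← SimpleGraph.card_neighborFinset_eq_degree] at hd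
  obtain ⟨c, hc⟩ := Finset.card_eq_one.mp hd
  have h1 : u ∈ G.neighborFinset v := by rwa [SimpleGraph.mem_neighborFinset]
  have h2 : w ∈ G.neighborFinset v := by rwa [SimpleGraph.mem_neighborFinset]
  rw [hc, Finset.mem_singleton] at h1 h2
  rw [h1, h2]

lemma decrease (hx : IsOptimalFVC G x) (v : V) (t : ℝ) (ht0 : 0 ≤ t) (htlt : t < x v)
    (hnb : ∀ u, G.Adj v u → 1 ≤ t + x u) : False := by
  have hfvc : IsFractionalVC G (Function.update x v t) := by
    constructor
    · intro u
      by_cases h : u = v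
      · subst h; simp [ht0]
      · rw [Function.update_of_ne h]; exact hx.1.1 u
    · intro a b hab
      have hne : a ≠ b := G.ne_of_adj hab
      by_cases ha : a = v
      · subst ha
        rw [Function.update_self, Function.update_of_ne (Ne.symm hne)]
        exact hnb b hab
      · by_cases hb : b = v
        · subst hb
          rw [Function.update_self, Function.update_of_ne hne]
          have := hnb a hab.symm
          linarith
        · rw [Function.update_of_ne ha, Function.update_of_ne hb]
          exact hx.1.2 a b hab
  have hopt := hx.2 _ hfvc
  have hsum : ∑ w, Function.update x v t w = (∑ w, x w) - x v + t := by
    rw [Finset.sum_update_of_mem (Finset.mem_univ v),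
      ← Finset.add_sum_erase _ x (Finset.mem_univ v)]
    simp [Finset.sdiff_singleton_eq_erase]
    ring
  rw [hsum] at hopt
  linarith

lemma two_pendants (hx : IsOptimalFVC G x) {u v1 v2 : V} (hu : x u = 0)
    (h1 : G.Adj u v1) (h2 : G.Adj u v2) (hd1 : G.degree v1 = 1) (hd2 : G.degree v2 = 1)
    (hne : v1 ≠ v2) : False := by
  have hxv1 : 1 ≤ x v1 := by have := hx.1.2 u v1 h1; linarith
  have hxv2 : 1 ≤ x v2 := by have := hx.1.2 u v2 h2; linarith
  have huv1 : u ≠ v1 := G.ne_of_adj h1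
  have huv2 : u ≠ v2 := G.ne_of_adj h2
  set x' : V → ℝ := fun w => if w = v1 then 0 else if w = v2 then 0 else if w = u then 1 else x w
    with hx'
  have e1 : x' v1 = 0 := by simp [hx']
  have e2 : x' v2 = 0 := by simp [hx', hne.symm]
  have e3 : x' u = 1 := by simp [hx', huv1, huv2]
  have e4 : ∀ w, w ≠ v1 → w ≠ v2 → w ≠ u → x' w = x w := by
    intro w hw1 hw2 hwu; simp [hx', hw1, hw2, hwu]
  have key : ∀ c d, (c = v1 ∨ c = v2) → G.Adj c d → x' c + x' d = 1 := by
    intro c d hc hcd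
    have hdu : d = u := by
      rcases hc with rfl | rfl
      · exact pendant_unique G hd1 h1.symm hcd
      · exact pendant_unique G hd2 h2.symm hcd
    subst hdu
    rcases hc with rfl | rfl <;> rw [e3] <;> [rw [e1]; rw [e2]] <;> ring
  have hfvc : IsFractionalVC G x' := by
    constructor
    · intro w
      by_cases hw1 : w = v1
      · rw [hw1, e1]
      · by_cases hw2 : w = v2
        · rw [hw2, e2]
        · by_cases hwu : w = u
          · rw [hwu, e3]; norm_num
          · rw [e4 w hw1 hw2 hwu]; exact hx.1.1 w
    · intro a b hab
      by_cases ha1 : a = v1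
      · exact le_of_eq (key a b (Or.inl ha1) hab).symm
      · by_cases ha2 : a = v2
        · exact le_of_eq (key a b (Or.inr ha2) hab).symm
        · by_cases hb1 : b = v1
          · have := key b a (Or.inl hb1) hab.symm; linarith
          · by_cases hb2 : b = v2
            · have := key b a (Or.inr hb2) hab.symm; linarith
            · by_cases hau : a = u
              · have ea : x' a = 1 := by rw [hau, e3]
                rw [ea]
                have hb0 : 0 ≤ x' b := by
                  by_cases hbu : b = u
                  · rw [hbu, e3]; norm_num
                  · rw [e4 b hb1 hb2 hbu]; exact hx.1.1 b
                linarith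
              · by_cases hbu : b = u
                · have eb : x' b = 1 := by rw [hbu, e3]
                  rw [eb, e4 a ha1 ha2 hau]
                  have := hx.1.1 a; linarith
                · rw [e4 a ha1 ha2 hau, e4 b hb1 hb2 hbu]
                  exact hx.1.2 a b hab
  have hopt := hx.2 x' hfvc
  have hsum : ∑ w, x' w = (∑ w, x w) + 1 - x v1 - x v2 := by
    have hdiff : (∑ w, x' w) - ∑ w, x w = ∑ w, (x' w - x w) := by
      rw [Finset.sum_sub_distrib]
    have hsub : ∑ w, (x' w - x w) = ∑ w ∈ ({v1, v2, u} : Finset V), (x' w - x w) := by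
      refine (Finset.sum_subset (Finset.subset_univ _) ?_).symm
      intro w _ hw
      simp only [Finset.mem_insert, Finset.mem_singleton, not_or] at hw
      rw [e4 w hw.1 hw.2.1 hw.2.2]; ring
    have hsmall : ∑ w ∈ ({v1, v2, u} : Finset V), (x' w - x w) = 1 - x v1 - x v2 := by
      rw [Finset.sum_insert (by simp [hne, huv1.symm]),
        Finset.sum_insert (by simp [huv2.symm]), Finset.sum_singleton,
        e1, e2, e3, hu]
      ring
    rw [hsub, hsmall] at hdiff
    linarith
  rw [hsum] at hopt
  linarith

end helpers

section indep
variable {V : Type*} [Fintype V] [DecidableEq V] (G : SimpleGraph V) [DecidableRel G.Adj]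

lemma cover_shrink (A R : Finset V) :
    A ∪ A.biUnion (fun a => G.neighborFinset a) ⊆
      ((A \ R) ∪ (A \ R).biUnion (fun a => G.neighborFinset a)) ∪
        (R ∪ R.biUnion (fun a => G.neighborFinset a)) := by
  intro w hw
  rw [Finset.mem_union] at hw
  rcases hw with hw | hw
  · by_cases h : w ∈ R
    · exact Finset.mem_union_right _ (Finset.mem_union_left _ h)
    · exact Finset.mem_union_left _ (Finset.mem_union_left _ (Finset.mem_sdiff.mpr ⟨hw, h⟩))
  · rw [Finset.mem_biUnion] at hw
    obtain ⟨b, hb, hwb⟩ := hw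
    by_cases h : b ∈ R
    · exact Finset.mem_union_right _
        (Finset.mem_union_right _ (Finset.mem_biUnion.mpr ⟨b, h, hwb⟩))
    · exact Finset.mem_union_left _ (Finset.mem_union_right _
        (Finset.mem_biUnion.mpr ⟨b, Finset.mem_sdiff.mpr ⟨hb, h⟩, hwb⟩))

lemma indep_bound : ∀ (n : ℕ) (A : Finset V), A.card ≤ n →
    (∀ a ∈ A, (G.neighborFinset a).card ≤ 2) →
    ∃ I, I ⊆ A ∧ (∀ u ∈ I, ∀ v ∈ I, ¬ G.Adj u v) ∧
      (A ∪ A.biUnion (fun a => G.neighborFinset a)).card ≤ 4 * I.card := by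
  intro n
  induction n with
  | zero =>
    intro A hA _
    have : A = ∅ := Finset.card_eq_zero.mp (Nat.le_zero.mp hA)
    subst this
    exact ⟨∅, Finset.Subset.refl _, by simp, by simp⟩
  | succ n ih =>
    intro A hcard hdeg
    rcases Finset.eq_empty_or_nonempty A with rfl | hAne
    · exact ⟨∅, Finset.Subset.refl _, by simp, by simp⟩
    by_cases hcase2 : ∃ a ∈ A, G.neighborFinset a ∩ A = ∅
    · obtain ⟨a, ha, hna⟩ := hcase2
      set A' := A.erase a with hA'
      have hA'sub : A' ⊆ A := Finset.erase_subset _ _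
      have hA'card : A'.card ≤ n := by
        rw [hA', Finset.card_erase_of_mem ha]; omega
      obtain ⟨I', hIsub, hIind, hIcard⟩ := ih A' hA'card (fun b hb => hdeg b (hA'sub hb))
      have hanotin : a ∉ I' := fun h => (Finset.notMem_erase a A) (hIsub h)
      have hnoadj : ∀ v ∈ I', ¬ G.Adj a v := by
        intro v hv hadj
        have : v ∈ G.neighborFinset a ∩ A :=
          Finset.mem_inter.mpr ⟨(SimpleGraph.mem_neighborFinset _ _ _).mpr hadj,
            hA'sub (hIsub hv)⟩
        rw [hna] at this; exact absurd this (Finset.notMem_empty v)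
      refine ⟨insert a I', Finset.insert_subset ha (hIsub.trans hA'sub), ?_, ?_⟩
      · intro u hu v hv
        rcases Finset.mem_insert.mp hu with rfl | hu' <;>
          rcases Finset.mem_insert.mp hv with rfl | hv'
        · exact G.irrefl
        · exact hnoadj v hv'
        · exact fun h => hnoadj u hu' h.symm
        · exact hIind u hu' v hv'
      · have hsub := cover_shrink G A {a}
        have hAR : A \ {a} = A' := by rw [hA', Finset.sdiff_singleton_eq_erase]
        rw [hAR] at hsub
        have hRcard : (({a} : Finset V) ∪ ({a} : Finset V).biUnion
            (fun b => G.neighborFinset b)).card ≤ 3 := by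
          refine le_trans (Finset.card_union_le _ _) ?_
          rw [Finset.singleton_biUnion, Finset.card_singleton]
          have := hdeg a ha; omega
        calc (A ∪ A.biUnion (fun b => G.neighborFinset b)).card
            ≤ _ := Finset.card_le_card hsub
          _ ≤ (A' ∪ A'.biUnion (fun b => G.neighborFinset b)).card +
              (({a} : Finset V) ∪ ({a} : Finset V).biUnion (fun b => G.neighborFinset b)).card :=
              Finset.card_union_le _ _
          _ ≤ 4 * I'.card + 3 := by omega
          _ ≤ 4 * (insert a I').card := by
              rw [Finset.card_insert_of_notMem hanotin]; omega
    · by_cases hcase3 : ∃ a ∈ A, ∃ b, G.neighborFinset a ∩ A = {b}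
      · obtain ⟨a, ha, b, hab⟩ := hcase3
        have hbA : b ∈ A := by
          have : b ∈ G.neighborFinset a ∩ A := by rw [hab]; exact Finset.mem_singleton_self b
          exact (Finset.mem_inter.mp this).2
        have hbN : b ∈ G.neighborFinset a := by
          have : b ∈ G.neighborFinset a ∩ A := by rw [hab]; exact Finset.mem_singleton_self b
          exact (Finset.mem_inter.mp this).1
        have hadj_ab : G.Adj a b := (SimpleGraph.mem_neighborFinset _ _ _).mp hbN
        have haN : a ∈ G.neighborFinset b := (SimpleGraph.mem_neighborFinset _ _ _).mpr hadj_ab.symm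
        have hne : a ≠ b := G.ne_of_adj hadj_ab
        set A' := A \ {a, b} with hA'
        have hA'sub : A' ⊆ A := Finset.sdiff_subset
        have hA'card : A'.card ≤ n := by
          have h1 : A' ⊆ A.erase a := by
            intro w hw
            rw [hA', Finset.mem_sdiff, Finset.mem_insert, Finset.mem_singleton] at hw
            exact Finset.mem_erase.mpr ⟨fun h => hw.2 (Or.inl h), hw.1⟩
          have := Finset.card_le_card h1
          rw [Finset.card_erase_of_mem ha] at this; omega
        obtain ⟨I', hIsub, hIind, hIcard⟩ := ih A' hA'card (fun c hc => hdeg c (hA'sub hc))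
        have hanotin : a ∉ I' := by
          intro h
          have := hIsub h
          rw [hA', Finset.mem_sdiff] at this
          exact this.2 (Finset.mem_insert_self a _)
        have hnoadj : ∀ v ∈ I', ¬ G.Adj a v := by
          intro v hv hadj
          have hvmem : v ∈ G.neighborFinset a ∩ A :=
            Finset.mem_inter.mpr ⟨(SimpleGraph.mem_neighborFinset _ _ _).mpr hadj,
              hA'sub (hIsub hv)⟩
          rw [hab, Finset.mem_singleton] at hvmem
          have := hIsub hv
          rw [hA', Finset.mem_sdiff] at this
          exact this.2 (by rw [hvmem]; exact Finset.mem_insert_of_mem (Finset.mem_singleton_self b))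
        refine ⟨insert a I', Finset.insert_subset ha (hIsub.trans hA'sub), ?_, ?_⟩
        · intro u hu v hv
          rcases Finset.mem_insert.mp hu with rfl | hu' <;>
            rcases Finset.mem_insert.mp hv with rfl | hv'
          · exact G.irrefl
          · exact hnoadj v hv'
          · exact fun h => hnoadj u hu' h.symm
          · exact hIind u hu' v hv'
        · have hsub := cover_shrink G A {a, b}
          have hRcard : (({a, b} : Finset V) ∪ ({a, b} : Finset V).biUnion
              (fun c => G.neighborFinset c)).card ≤ 4 := by
            have hEsub : ({a, b} : Finset V) ∪ ({a, b} : Finset V).biUnion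
                (fun c => G.neighborFinset c) ⊆
                ({a, b} : Finset V) ∪ ((G.neighborFinset a).erase b ∪ (G.neighborFinset b).erase a) := by
              intro w hw
              rw [Finset.mem_union] at hw
              rcases hw with hw | hw
              · exact Finset.mem_union_left _ hw
              · rw [Finset.mem_biUnion] at hw
                obtain ⟨c, hc, hwc⟩ := hw
                rw [Finset.mem_insert, Finset.mem_singleton] at hc
                rcases hc with rfl | rfl
                · by_cases hwb : w = b
                  · exact Finset.mem_union_left _ (by simp [hwb])
                  · exact Finset.mem_union_right _ (Finset.mem_union_left _
                      (Finset.mem_erase.mpr ⟨hwb, hwc⟩))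
                · by_cases hwa : w = a
                  · exact Finset.mem_union_left _ (by simp [hwa])
                  · exact Finset.mem_union_right _ (Finset.mem_union_right _
                      (Finset.mem_erase.mpr ⟨hwa, hwc⟩))
            refine le_trans (Finset.card_le_card hEsub) ?_
            refine le_trans (Finset.card_union_le _ _) ?_
            have h1 : ({a, b} : Finset V).card ≤ 2 := Finset.card_insert_le _ _ |>.trans (by simp)
            have h2 : ((G.neighborFinset a).erase b).card ≤ 1 := by
              rw [Finset.card_erase_of_mem hbN]
              have := hdeg a ha; omega
            have h3 : ((G.neighborFinset b).erase a).card ≤ 1 := by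
              rw [Finset.card_erase_of_mem haN]
              have := hdeg b hbA; omega
            have := Finset.card_union_le ((G.neighborFinset a).erase b)
              ((G.neighborFinset b).erase a)
            omega
          calc (A ∪ A.biUnion (fun c => G.neighborFinset c)).card
              ≤ _ := Finset.card_le_card hsub
            _ ≤ (A' ∪ A'.biUnion (fun c => G.neighborFinset c)).card +
                (({a, b} : Finset V) ∪ ({a, b} : Finset V).biUnion
                  (fun c => G.neighborFinset c)).card := Finset.card_union_le _ _
            _ ≤ 4 * I'.card + 4 := by omega
            _ ≤ 4 * (insert a I').card := by
                rw [Finset.card_insert_of_notMem hanotin]; omega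
      · -- case 4: every vertex of A has both neighbors in A
        have hNsub : ∀ a ∈ A, G.neighborFinset a ⊆ A := by
          intro a ha
          have h0 : G.neighborFinset a ∩ A ≠ ∅ := fun h => hcase2 ⟨a, ha, h⟩
          have h1 : ∀ b, G.neighborFinset a ∩ A ≠ {b} := fun b h => hcase3 ⟨a, ha, b, h⟩
          have hge2 : 2 ≤ (G.neighborFinset a ∩ A).card := by
            rcases Nat.lt_or_ge (G.neighborFinset a ∩ A).card 2 with h | h
            · interval_cases hc : (G.neighborFinset a ∩ A).card
              · exact absurd (Finset.card_eq_zero.mp hc) h0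
              · obtain ⟨c, hc'⟩ := Finset.card_eq_one.mp hc
                exact absurd hc' (h1 c)
            · exact h
          have hsub : G.neighborFinset a ∩ A = G.neighborFinset a := by
            apply Finset.eq_of_subset_of_card_le (Finset.inter_subset_left)
            have := hdeg a ha; omega
          intro w hw
          rw [← hsub] at hw
          exact (Finset.mem_inter.mp hw).2
        obtain ⟨a, ha⟩ := hAne
        set A' := A \ insert a (G.neighborFinset a) with hA'
        have hA'sub : A' ⊆ A := Finset.sdiff_subset
        have hA'card : A'.card ≤ n := by
          have h1 : A' ⊆ A.erase a := by
            intro w hw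
            rw [hA', Finset.mem_sdiff, Finset.mem_insert] at hw
            exact Finset.mem_erase.mpr ⟨fun h => hw.2 (Or.inl h), hw.1⟩
          have := Finset.card_le_card h1
          rw [Finset.card_erase_of_mem ha] at this; omega
        obtain ⟨I', hIsub, hIind, hIcard⟩ := ih A' hA'card (fun c hc => hdeg c (hA'sub hc))
        have hanotin : a ∉ I' := by
          intro h
          have := hIsub h
          rw [hA', Finset.mem_sdiff] at this
          exact this.2 (Finset.mem_insert_self a _)
        have hnoadj : ∀ v ∈ I', ¬ G.Adj a v := by
          intro v hv hadj
          have := hIsub hv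
          rw [hA', Finset.mem_sdiff] at this
          exact this.2 (Finset.mem_insert_of_mem
            ((SimpleGraph.mem_neighborFinset _ _ _).mpr hadj))
        refine ⟨insert a I', Finset.insert_subset ha (hIsub.trans hA'sub), ?_, ?_⟩
        · intro u hu v hv
          rcases Finset.mem_insert.mp hu with rfl | hu' <;>
            rcases Finset.mem_insert.mp hv with rfl | hv'
          · exact G.irrefl
          · exact hnoadj v hv'
          · exact fun h => hnoadj u hu' h.symm
          · exact hIind u hu' v hv'
        · have hUA : A ∪ A.biUnion (fun c => G.neighborFinset c) ⊆ A :=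
            Finset.union_subset (Finset.Subset.refl A)
              (Finset.biUnion_subset.mpr hNsub)
          have h1 : A ⊆ A' ∪ insert a (G.neighborFinset a) := by
            intro w hw
            by_cases h : w ∈ insert a (G.neighborFinset a)
            · exact Finset.mem_union_right _ h
            · exact Finset.mem_union_left _ (Finset.mem_sdiff.mpr ⟨hw, h⟩)
          have hAcard : A.card ≤ A'.card + 3 := by
            refine le_trans (Finset.card_le_card h1) ?_
            refine le_trans (Finset.card_union_le _ _) ?_
            have h2 := Finset.card_insert_le a (G.neighborFinset a)
            have := hdeg a ha; omega
          have hA'le : A'.card ≤ (A' ∪ A'.biUnion (fun c => G.neighborFinset c)).card :=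
            Finset.card_le_card (Finset.subset_union_left)
          have := Finset.card_le_card hUA
          rw [Finset.card_insert_of_notMem hanotin]
          omega

end indep

theorem stmt_0 {V : Type*} [Fintype V] [DecidableEq V]
    (G : SimpleGraph V) [DecidableRel G.Adj]
    (x : V → ℝ) (hx : IsOptimalFVC G x) (hxhalf : IsHalfIntegral x)
    (L : Set V)
    (hL : L = {v | G.degree v = 1 ∨ (G.degree v = 2 ∧ x v = 1 / 2)})
    (V' : Set V)
    (hV' : V' = L ∪ ⋃ v ∈ L, G.neighborSet v)
    (Vstar : Finset V)
    (hVstar : ∀ w, w ∈ Vstar ↔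
      ∃ v, (G.degree v = 1 ∨ G.degree v = 2) ∧ (w = v ∨ w ∈ G.neighborSet v)) :
    ∃ (C : Finset V) (y : V → ℝ),
      IsVertexCover G (↑C : Set V) ∧
      (∀ v, y v = if v ∈ C then 1 else 0) ∧
      (∀ u ∈ V', 3 ≤ G.degree u → u ∈ C) ∧
      (∑ v ∈ Vstar, y v ≤ (3 / 2) * ∑ v ∈ Vstar, x v) ∧
      (∑ v ∈ Vstarᶜ, y v ≤ 2 * ∑ v ∈ Vstarᶜ, x v) := by
  classical
  have hx0 : ∀ v, 0 ≤ x v := hx.1.1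
  have hedge : ∀ u v, G.Adj u v → 1 ≤ x u + x v := hx.1.2
  -- basic structural facts
  have hzero_one : ∀ u v, G.Adj u v → x u = 0 → x v = 1 := by
    intro u v huv hu
    have := hedge u v huv
    rcases hxhalf v with h | h | h <;> [linarith; linarith; exact h]
  have hpen1 : ∀ v u, G.degree v = 1 → x v = 1 → G.Adj v u → x u = 0 := by
    intro v u hd hv huv
    rcases hxhalf u with h | h | h
    · exact h
    · exfalso
      refine decrease G hx v (1/2) (by norm_num) (by rw [hv]; norm_num) ?_
      intro w hw
      rw [pendant_unique G hd huv hw, h]; norm_num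
    · exfalso
      refine decrease G hx v 0 le_rfl (by rw [hv]; norm_num) ?_
      intro w hw
      rw [pendant_unique G hd huv hw, h]; norm_num
  have huniq2 : ∀ v a b, G.degree v = 2 → x v = 1 → G.Adj v a → G.Adj v b →
      x a = 1/2 → x b = 1/2 → a = b := by
    intro v a b hd hv ha hb hxa hxb
    by_contra hne
    have hNv : G.neighborFinset v = {a, b} := by
      symm
      apply Finset.eq_of_subset_of_card_le
      · intro w hw
        rw [Finset.mem_insert, Finset.mem_singleton] at hw
        rcases hw with rfl | rfl <;> rw [SimpleGraph.mem_neighborFinset] <;> assumption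
      · rw [SimpleGraph.card_neighborFinset_eq_degree, hd, Finset.card_insert_of_notMem
          (by rwa [Finset.mem_singleton]), Finset.card_singleton]
    refine decrease G hx v (1/2) (by norm_num) (by rw [hv]; norm_num) ?_
    intro w hw
    have : w ∈ G.neighborFinset v := (SimpleGraph.mem_neighborFinset _ _ _).mpr hw
    rw [hNv, Finset.mem_insert, Finset.mem_singleton] at this
    rcases this with rfl | rfl <;> [rw [hxa]; rw [hxb]] <;> norm_num
  -- the pendant-swap set S and the map f
  set f : V → V := fun u => if h : ∃ v, G.Adj u v ∧ G.degree v = 1 then h.choose else u with hf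
  set S : Finset V :=
    Finset.univ.filter (fun u => x u = 0 ∧ ∃ v, G.Adj u v ∧ G.degree v = 1) with hSdef
  have hSmem : ∀ u, u ∈ S ↔ x u = 0 ∧ ∃ v, G.Adj u v ∧ G.degree v = 1 := by
    intro u; rw [hSdef]; simp
  have hfspec : ∀ u ∈ S, G.Adj u (f u) ∧ G.degree (f u) = 1 ∧ x (f u) = 1 := by
    intro u hu
    obtain ⟨hu0, hex⟩ := (hSmem u).mp hu
    have h1 : G.Adj u hex.choose ∧ G.degree hex.choose = 1 := hex.choose_spec
    have hfu : f u = hex.choose := by rw [hf]; simp only [dif_pos hex]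
    rw [hfu]
    exact ⟨h1.1, h1.2, hzero_one u _ h1.1 hu0⟩
  have hfuniq : ∀ u ∈ S, ∀ v, G.Adj u v → G.degree v = 1 → v = f u := by
    intro u hu v huv hdv
    by_contra hne
    obtain ⟨hadj, hd, _⟩ := hfspec u hu
    exact two_pendants G hx ((hSmem u).mp hu).1 huv hadj hdv hd hne
  have hfinj : Set.InjOn f S := by
    intro u hu u' hu' heq
    obtain ⟨hadj, hd, _⟩ := hfspec u hu
    obtain ⟨hadj', _, _⟩ := hfspec u' hu'
    rw [← heq] at hadj'
    exact (pendant_unique G hd hadj.symm hadj'.symm).symm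
  -- the low-degree half set A and independent set I
  set A : Finset V :=
    Finset.univ.filter (fun v => x v = 1/2 ∧ (G.degree v = 1 ∨ G.degree v = 2)) with hAdef
  have hAmem : ∀ v, v ∈ A ↔ x v = 1/2 ∧ (G.degree v = 1 ∨ G.degree v = 2) := by
    intro v; rw [hAdef]; simp
  have hAdeg : ∀ a ∈ A, (G.neighborFinset a).card ≤ 2 := by
    intro a ha
    rw [SimpleGraph.card_neighborFinset_eq_degree]
    rcases ((hAmem a).mp ha).2 with h | h <;> omega
  obtain ⟨I, hIA, hIind, hIcard⟩ := indep_bound G A.card A le_rfl hAdeg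
  set fS : Finset V := S.image f with hfSdef
  have hfSmem : ∀ v ∈ fS, x v = 1 ∧ G.degree v = 1 := by
    intro v hv
    rw [hfSdef, Finset.mem_image] at hv
    obtain ⟨u, hu, rfl⟩ := hv
    obtain ⟨_, hd, hx1⟩ := hfspec u hu
    exact ⟨hx1, hd⟩
  have hInotone : ∀ v ∈ I, x v = 1/2 := fun v hv => ((hAmem v).mp (hIA hv)).1
  have hIdeg : ∀ v ∈ I, G.degree v ≤ 2 := by
    intro v hv; rcases ((hAmem v).mp (hIA hv)).2 with h | h <;> omega
  set Cov : Finset V :=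
    ((Finset.univ.filter (fun v => x v = 1 ∨ x v = 1/2)) \ (fS ∪ I)) ∪ S with hCovdef
  have hCmem : ∀ v, v ∈ Cov ↔
      ((x v = 1 ∨ x v = 1/2) ∧ v ∉ fS ∧ v ∉ I) ∨ v ∈ S := by
    intro v
    rw [hCovdef]
    simp only [Finset.mem_union, Finset.mem_sdiff, Finset.mem_filter, Finset.mem_univ,
      true_and, not_or]
  have hCS : ∀ u ∈ S, u ∈ Cov := fun u hu => (hCmem u).mpr (Or.inr hu)
  have hC1 : ∀ v, x v = 1 → G.degree v ≠ 1 → v ∈ Cov := by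
    intro v hv hd
    refine (hCmem v).mpr (Or.inl ⟨Or.inl hv, fun h => hd (hfSmem v h).2, fun h => ?_⟩)
    have := hInotone v h; rw [hv] at this; norm_num at this
  have hC2 : ∀ v, x v = 1/2 → v ∉ I → v ∈ Cov := by
    intro v hv hvI
    refine (hCmem v).mpr (Or.inl ⟨Or.inr hv, fun h => ?_, hvI⟩)
    have := (hfSmem v h).1; rw [hv] at this; norm_num at this
  refine ⟨Cov, fun v => if v ∈ Cov then 1 else 0, ?_, fun v => rfl, ?_, ?_, ?_⟩
  · -- vertex cover
    intro u v huv
    simp only [Finset.coe_union, Set.mem_union, Finset.mem_coe]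
    rcases hxhalf u with hu | hu | hu <;> rcases hxhalf v with hv | hv | hv
    · have := hedge u v huv; linarith
    · have := hedge u v huv; linarith
    · by_cases hd : G.degree v = 1
      · exact Or.inl (hCS u ((hSmem u).mpr ⟨hu, v, huv, hd⟩))
      · exact Or.inr (hC1 v hv hd)
    · have := hedge u v huv; linarith
    · by_cases huI : u ∈ I
      · refine Or.inr (hC2 v hv fun hvI => ?_)
        exact hIind u huI v hvI huv
      · exact Or.inl (hC2 u hu huI)
    · refine Or.inr (hC1 v hv fun hd => ?_)
      have := hpen1 v u hd hv huv.symm; rw [hu] at this; norm_num at this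
    · by_cases hd : G.degree u = 1
      · exact Or.inr (hCS v ((hSmem v).mpr ⟨hv, u, huv.symm, hd⟩))
      · exact Or.inl (hC1 u hu hd)
    · refine Or.inl (hC1 u hu fun hd => ?_)
      have := hpen1 u v hd hu huv; rw [hv] at this; norm_num at this
    · refine Or.inl (hC1 u hu fun hd => ?_)
      have := hpen1 u v hd hu huv; rw [hv] at this; norm_num at this
  · -- property (i)
    intro u huV' hdeg3
    rw [hV'] at huV'
    have hcase : ∃ v ∈ L, G.Adj v u := by
      rcases huV' with hL' | hN
      · rw [hL] at hL'
        rcases hL' with h | h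
        · omega
        · omega
      · rw [Set.mem_iUnion₂] at hN
        obtain ⟨v, hvL, hadj⟩ := hN
        exact ⟨v, hvL, hadj⟩
    obtain ⟨v, hvL, hadj⟩ := hcase
    rw [hL] at hvL
    have hu_ne0 : x u = 0 → u ∈ Cov := by
      intro hu0
      rcases hvL with hd | ⟨hd, hxv⟩
      · exact hCS u ((hSmem u).mpr ⟨hu0, v, hadj.symm, hd⟩)
      · exfalso
        have := hzero_one u v hadj.symm hu0
        rw [hxv] at this; norm_num at this
    rcases hxhalf u with hu | hu | hu
    · exact hu_ne0 hu
    · refine hC2 u hu fun huI => ?_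
      have := hIdeg u huI; omega
    · exact hC1 u hu (by omega)
  · -- (ii): sum over Vstar
    set P : Finset V := Vstar.filter (fun v => x v = 1) with hPdef
    set H : Finset V := Vstar.filter (fun v => x v = 1/2) with hHdef
    have hsumx : ∑ v ∈ Vstar, x v = (P.card : ℝ) + (1/2) * H.card := by
      rw [← Finset.sum_filter_add_sum_filter_not Vstar (fun v => x v = 1)]
      have e1 : ∑ v ∈ Vstar.filter (fun v => x v = 1), x v = (P.card : ℝ) := by
        rw [Finset.sum_congr rfl (fun v hv => (Finset.mem_filter.mp hv).2), hPdef]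
        simp
      have e2 : ∑ v ∈ Vstar.filter (fun v => ¬ x v = 1), x v = (1/2) * H.card := by
        rw [← Finset.sum_filter_add_sum_filter_not (Vstar.filter (fun v => ¬ x v = 1))
          (fun v => x v = 1/2)]
        have e3 : (Vstar.filter (fun v => ¬ x v = 1)).filter (fun v => x v = 1/2) = H := by
          rw [Finset.filter_filter, hHdef]
          apply Finset.filter_congr
          intro v _
          constructor
          · rintro ⟨_, h⟩; exact h
          · intro h; exact ⟨by rw [h]; norm_num, h⟩
        have e4 : ∑ v ∈ (Vstar.filter (fun v => ¬ x v = 1)).filter (fun v => x v = 1/2), x v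
            = (1/2) * H.card := by
          rw [Finset.sum_congr rfl (fun v hv => (Finset.mem_filter.mp hv).2), e3]
          rw [Finset.sum_const]
          ring
        have e5 : ∑ v ∈ (Vstar.filter (fun v => ¬ x v = 1)).filter (fun v => ¬ x v = 1/2),
            x v = 0 := by
          apply Finset.sum_eq_zero
          intro v hv
          rw [Finset.mem_filter, Finset.mem_filter] at hv
          rcases hxhalf v with h | h | h
          · exact h
          · exact absurd h hv.2
          · exact absurd h hv.1.2
        rw [e4, e5, add_zero]
      rw [e1, e2]
    have hsumy : ∑ v ∈ Vstar, (if v ∈ Cov then (1:ℝ) else 0)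
        = ((Vstar.filter (fun v => v ∈ Cov)).card : ℝ) := by
      rw [← Finset.sum_filter]
      simp
    have hfSP : fS ⊆ P := by
      intro v hv
      obtain ⟨h1, hd⟩ := hfSmem v hv
      exact Finset.mem_filter.mpr ⟨(hVstar v).mpr ⟨v, Or.inl hd, Or.inl rfl⟩, h1⟩
    have hIH' : I ⊆ H := by
      intro v hv
      obtain ⟨hh, hd⟩ := (hAmem v).mp (hIA hv)
      exact Finset.mem_filter.mpr ⟨(hVstar v).mpr ⟨v, hd, Or.inl rfl⟩, hh⟩
    have hSsub : S ⊆ Vstar := by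
      intro u hu
      obtain ⟨_, v, hadj, hd⟩ := (hSmem u).mp hu
      exact (hVstar u).mpr ⟨v, Or.inl hd, Or.inr hadj.symm⟩
    have hdecomp : Vstar.filter (fun v => v ∈ Cov) ⊆ (P \ fS) ∪ ((H \ I) ∪ S) := by
      intro w hw
      obtain ⟨hwV, hwC⟩ := Finset.mem_filter.mp hw
      rcases (hCmem w).mp hwC with ⟨hx1, hnfS, hnI⟩ | hS'
      · rcases hx1 with h | h
        · exact Finset.mem_union_left _
            (Finset.mem_sdiff.mpr ⟨Finset.mem_filter.mpr ⟨hwV, h⟩, hnfS⟩)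
        · exact Finset.mem_union_right _ (Finset.mem_union_left _
            (Finset.mem_sdiff.mpr ⟨Finset.mem_filter.mpr ⟨hwV, h⟩, hnI⟩))
      · exact Finset.mem_union_right _ (Finset.mem_union_right _ hS')
    have h1 : (P \ fS).card = P.card - fS.card := Finset.card_sdiff_of_subset hfSP
    have h2 : (H \ I).card = H.card - I.card := Finset.card_sdiff_of_subset hIH'
    have hfScard : fS.card = S.card := by
      rw [hfSdef]
      exact Finset.card_image_of_injOn hfinj
    have hfc : fS.card ≤ P.card := Finset.card_le_card hfSP
    have hic : I.card ≤ H.card := Finset.card_le_card hIH'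
    have hcards : (Vstar.filter (fun v => v ∈ Cov)).card + I.card ≤ P.card + H.card := by
      have c1 := Finset.card_le_card hdecomp
      have c2 := Finset.card_union_le (P \ fS) ((H \ I) ∪ S)
      have c3 := Finset.card_union_le (H \ I) S
      omega
    -- key counting inequality
    set NA := A.biUnion (fun a => G.neighborFinset a) with hNAdef
    set D2 : Finset V := Finset.univ.filter (fun v => G.degree v = 2 ∧ x v = 1) with hD2def
    have hHsplit : H.card ≤ (H \ (A ∪ NA)).card + (A ∪ NA).card :=
      Finset.card_le_card_sdiff_add_card
    have hwit : ∀ w ∈ H \ (A ∪ NA), ∃ v, G.degree v = 2 ∧ x v = 1 ∧ G.Adj v w := by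
      intro w hw
      obtain ⟨hwH, hwn⟩ := Finset.mem_sdiff.mp hw
      obtain ⟨hwV, hwx⟩ := Finset.mem_filter.mp hwH
      obtain ⟨v, hdv, hvw⟩ := (hVstar w).mp hwV
      rcases hvw with rfl | hmem
      · exact absurd (Finset.mem_union_left _ ((hAmem w).mpr ⟨hwx, hdv⟩)) hwn
      · have hadj : G.Adj v w := hmem
        rcases hxhalf v with h0 | hh | hone
        · have := hzero_one v w hadj h0
          rw [this] at hwx; norm_num at hwx
        · exact absurd (Finset.mem_union_right _ (Finset.mem_biUnion.mpr
            ⟨v, (hAmem v).mpr ⟨hh, hdv⟩, (SimpleGraph.mem_neighborFinset _ _ _).mpr hadj⟩)) hwn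
        · rcases hdv with hd1 | hd2
          · have := hpen1 v w hd1 hone hadj
            rw [this] at hwx; norm_num at hwx
          · exact ⟨v, hd2, hone, hadj⟩
    set g : V → V := fun w =>
      if h : ∃ v, G.degree v = 2 ∧ x v = 1 ∧ G.Adj v w then h.choose else w with hgdef
    have hgspec : ∀ w ∈ H \ (A ∪ NA),
        G.degree (g w) = 2 ∧ x (g w) = 1 ∧ G.Adj (g w) w := by
      intro w hw
      have hex := hwit w hw
      have : g w = hex.choose := by rw [hgdef]; simp only [dif_pos hex]
      rw [this]
      exact hex.choose_spec
    have hgmaps : ∀ w ∈ H \ (A ∪ NA), g w ∈ D2 := by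
      intro w hw
      obtain ⟨hd, hx1, _⟩ := hgspec w hw
      exact Finset.mem_filter.mpr ⟨Finset.mem_univ _, hd, hx1⟩
    have hginj : Set.InjOn g ↑(H \ (A ∪ NA)) := by
      intro w1 hw1 w2 hw2 heq
      have hs1 := hgspec w1 (Finset.mem_coe.mp hw1)
      have hs2 := hgspec w2 (Finset.mem_coe.mp hw2)
      rw [heq] at hs1
      have hx1 : x w1 = 1/2 :=
        (Finset.mem_filter.mp (Finset.mem_sdiff.mp (Finset.mem_coe.mp hw1)).1).2
      have hx2 : x w2 = 1/2 :=
        (Finset.mem_filter.mp (Finset.mem_sdiff.mp (Finset.mem_coe.mp hw2)).1).2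
      exact huniq2 (g w2) w1 w2 hs2.1 hs2.2.1 hs1.2.2 hs2.2.2 hx1 hx2
    have hHD : (H \ (A ∪ NA)).card ≤ D2.card :=
      Finset.card_le_card_of_injOn g hgmaps hginj
    have hD2P : D2 ⊆ P := by
      intro v hv
      obtain ⟨_, hd2, hone⟩ := Finset.mem_filter.mp hv
      exact Finset.mem_filter.mpr ⟨(hVstar v).mpr ⟨v, Or.inr hd2, Or.inl rfl⟩, hone⟩
    have hkey : H.card ≤ 4 * I.card + 2 * P.card := by
      have hD2card := Finset.card_le_card hD2P
      omega
    -- put it together over ℝ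
    rw [hsumy, hsumx]
    have hcR : ((Vstar.filter (fun v => v ∈ Cov)).card : ℝ) + I.card ≤ P.card + H.card := by
      exact_mod_cast hcards
    have hkR : (H.card : ℝ) ≤ 4 * I.card + 2 * P.card := by exact_mod_cast hkey
    linarith
  · -- (iii): sum over complement
    have hpt : ∀ v ∈ Vstarᶜ, (if v ∈ Cov then (1:ℝ) else 0) ≤ 2 * x v := by
      intro v hv
      rw [Finset.mem_compl] at hv
      by_cases hvC : v ∈ Cov
      · rw [if_pos hvC]
        rcases (hCmem v).mp hvC with ⟨h, _, _⟩ | hS'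
        · rcases h with h | h <;> rw [h] <;> norm_num
        · exfalso
          obtain ⟨_, w, hadj, hd⟩ := (hSmem v).mp hS'
          exact hv ((hVstar v).mpr ⟨w, Or.inl hd, Or.inr hadj.symm⟩)
      · rw [if_neg hvC]
        have := hx0 v; linarith
    calc ∑ v ∈ Vstarᶜ, (if v ∈ Cov then (1:ℝ) else 0) ≤ ∑ v ∈ Vstarᶜ, 2 * x v :=
        Finset.sum_le_sum hpt
      _ = 2 * ∑ v ∈ Vstarᶜ, x v := by rw [Finset.mul_sum]
end

section
/- Let G = (V,E) be a finite simple graph, let V* = ⋃_{v : deg(v) ∈ {1,2}} ({v} ∪ N(v)), and let Y = {u ∈ V : deg(u) ≥ 3 and there exists v ∈ N(u) with deg(v) ∈ {1,2}}. Then every optimal half-integral fractional vertex cover x of G satisfies ∑_{v ∈ V*} x(v) ≥ (1/2)·|Y|. -/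
/-!
Split `Y` according to whether `x` vanishes. A vertex `u ∈ Y` with `x u ≠ 0` carries at least
`1/2` itself. A vertex `u ∈ Y` with `x u = 0` has a neighbour `v` of degree at most `2`, and the
cover condition forces `x v ≥ 1`; such a `v` is adjacent to at most two vertices of `Y`, so these
vertices of weight at least `1` number at least half of the vertices `u`. The two groups of vertices that
carry the weight have different degrees, hence are disjoint, and both lie in `V*`.
-/

open Finset

namespace SimpleGraph

theorem card_le_mul_card_of_forall_exists_adj {V : Type*} [Fintype V] (G : SimpleGraph V)
    [DecidableRel G.Adj] {s t : Finset V} {k : ℕ}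
    (hs : ∀ u ∈ s, ∃ v ∈ t, G.Adj u v) (ht : ∀ v ∈ t, G.degree v ≤ k) :
    #s ≤ k * #t := by
  have hcount := card_mul_le_card_mul G.Adj (m := 1) (n := k)
    (fun u hu ↦ by
      obtain ⟨v, hv, huv⟩ := hs u hu
      exact one_le_card.2 ⟨v, mem_filter.2 ⟨hv, huv⟩⟩)
    (fun v hv ↦ calc
      #(s.bipartiteBelow G.Adj v) ≤ #(G.neighborFinset v) :=
        card_le_card fun u hu ↦ by
          simpa [bipartiteBelow, G.adj_comm] using (mem_filter.1 hu).2
      _ ≤ k := (G.card_neighborFinset_eq_degree v).trans_le (ht v hv))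
  simpa [mul_comm] using hcount

end SimpleGraph

theorem IsHalfIntegral.half_le_of_ne_zero {V : Type*} {x : V → ℝ} (hx : IsHalfIntegral x)
    {v : V} (hv : x v ≠ 0) : 1 / 2 ≤ x v := by
  rcases hx v with h | h | h
  · exact absurd h hv
  · exact h.ge
  · rw [h]; norm_num

theorem IsFractionalVC.card_le_two_mul_sum {V : Type*} [Fintype V] [DecidableEq V]
    {G : SimpleGraph V} [DecidableRel G.Adj] {x : V → ℝ} (hx : IsFractionalVC G x)
    (hhalf : IsHalfIntegral x) {S Y : Finset V} (hYS : Y ⊆ S)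
    (hY : ∀ u ∈ Y, 3 ≤ G.degree u ∧ ∃ v ∈ S, G.Adj u v ∧ G.degree v ≤ 2) :
    (#Y : ℝ) ≤ 2 * ∑ v ∈ S, x v := by
  set Y₀ := Y.filter (x · = 0)
  set Y₁ := Y.filter (¬ x · = 0)
  set L := S.filter fun v ↦ G.degree v ≤ 2 ∧ 1 ≤ x v
  have hY₀L : ∀ u ∈ Y₀, ∃ v ∈ L, G.Adj u v := fun u hu ↦ by
    obtain ⟨huY, hu0⟩ := mem_filter.1 hu
    obtain ⟨v, hvS, huv, hv⟩ := (hY u huY).2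
    have hcover := hx.2 u v huv
    exact ⟨v, mem_filter.2 ⟨hvS, hv, by linarith⟩, huv⟩
  have hY₀ : (#Y₀ : ℝ) ≤ 2 * #L := by
    exact_mod_cast G.card_le_mul_card_of_forall_exists_adj hY₀L fun v hv ↦ (mem_filter.1 hv).2.1
  have hY₁ : (#Y₁ : ℝ) ≤ 2 * ∑ v ∈ Y₁, x v := by
    have := card_nsmul_le_sum Y₁ x (1 / 2) fun u hu ↦
      hhalf.half_le_of_ne_zero (mem_filter.1 hu).2
    rw [nsmul_eq_mul] at this
    linarith
  have hL : (#L : ℝ) ≤ ∑ v ∈ L, x v := by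
    simpa using card_nsmul_le_sum L x 1 fun v hv ↦ (mem_filter.1 hv).2.2
  have hdisj : Disjoint Y₁ L := disjoint_left.2 fun u hu hu' ↦ by
    have := (hY u (mem_filter.1 hu).1).1
    have := (mem_filter.1 hu').2.1
    omega
  have hsub : Y₁ ∪ L ⊆ S := union_subset ((filter_subset _ _).trans hYS) (filter_subset _ _)
  have hsum : ∑ v ∈ Y₁, x v + ∑ v ∈ L, x v ≤ ∑ v ∈ S, x v := by
    rw [← sum_union hdisj]
    exact sum_le_sum_of_subset_of_nonneg hsub fun v _ _ ↦ hx.1 v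
  have hsplit : #Y₀ + #Y₁ = #Y := card_filter_add_card_filter_not _
  rw [← hsplit]
  push_cast
  linarith

theorem stmt_2 {V : Type*} [Fintype V] [DecidableEq V]
    (G : SimpleGraph V) [DecidableRel G.Adj]
    (Vstar : Finset V)
    (hVstar : ∀ w, w ∈ Vstar ↔
      ∃ v, (G.degree v = 1 ∨ G.degree v = 2) ∧ (w = v ∨ w ∈ G.neighborSet v))
    (Y : Finset V)
    (hY : ∀ u, u ∈ Y ↔
      3 ≤ G.degree u ∧ ∃ v ∈ G.neighborSet u, (G.degree v = 1 ∨ G.degree v = 2))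
    (x : V → ℝ) (hx : IsOptimalFVC G x) (hxhalf : IsHalfIntegral x) :
    (1 / 2 : ℝ) * (Y.card : ℝ) ≤ ∑ v ∈ Vstar, x v := by
  have hYV : ∀ u ∈ Y, 3 ≤ G.degree u ∧ ∃ v ∈ Vstar, G.Adj u v ∧ G.degree v ≤ 2 := by
    intro u hu
    obtain ⟨hu3, v, huv, hv⟩ := (hY u).1 hu
    exact ⟨hu3, v, (hVstar v).2 ⟨v, hv, Or.inl rfl⟩, huv, by omega⟩
  have hYsub : Y ⊆ Vstar := fun u hu ↦ by
    obtain ⟨-, v, huv, hv⟩ := (hY u).1 hu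
    exact (hVstar u).2 ⟨v, hv, Or.inr (G.adj_symm huv)⟩
  have := IsFractionalVC.card_le_two_mul_sum hx.1 hxhalf hYsub hYV
  linarith
end

section
/- Let β > 2 be a real number and let Δ be a natural number with Δ ≥ 8 and Δ ≥ (8^β + 2·4^β + 6·2^β + 7)/(1 + 2^β). Then ∑_{i=1}^{Δ} (Δ + 1 − i)/((Δ+1)·i^β) ≥ 1 + 2^{−β}. -/
/-!
Keep only the terms `i = 1, 2, 4, 8` of the (nonnegative) sum. With `a = 2 ^ β` they are
`(Δ + 1 - 2 ^ k) / ((Δ + 1) a ^ k)`, and clearing the denominator `(Δ + 1) a ^ 3` turns the claim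
into the polynomial inequality `a ^ 3 + 2 a ^ 2 + 3 a + 7 ≤ Δ (1 + a)`, which the hypothesis on `Δ`
gives with room to spare.
-/

open Finset

lemma two_pow_rpow (k : ℕ) (β : ℝ) : ((2 : ℝ) ^ k) ^ β = ((2 : ℝ) ^ β) ^ k :=
  (Real.rpow_pow_comm zero_le_two β k).symm

lemma div_mul_rpow_nonneg {D i : ℕ} (hi : i ≤ D) (β : ℝ) :
    0 ≤ ((D : ℝ) + 1 - i) / (((D : ℝ) + 1) * (i : ℝ) ^ β) := by
  have : (i : ℝ) ≤ D := by exact_mod_cast hi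
  have : 0 ≤ (i : ℝ) ^ β := Real.rpow_nonneg i.cast_nonneg β
  exact div_nonneg (by linarith) (by positivity)

lemma one_add_inv_le_of_cubic_le {a D : ℝ} (ha : 0 < a) (hD : 0 ≤ D)
    (h : a ^ 3 + 2 * a ^ 2 + 3 * a + 7 ≤ D * (1 + a)) :
    1 + a⁻¹ ≤ D / (D + 1) + (D - 1) / ((D + 1) * a) + (D - 3) / ((D + 1) * a ^ 2)
      + (D - 7) / ((D + 1) * a ^ 3) := by
  rw [← sub_nonneg]
  have key : D / (D + 1) + (D - 1) / ((D + 1) * a) + (D - 3) / ((D + 1) * a ^ 2)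
      + (D - 7) / ((D + 1) * a ^ 3) - (1 + a⁻¹)
      = (D * (1 + a) - (a ^ 3 + 2 * a ^ 2 + 3 * a + 7)) / ((D + 1) * a ^ 3) := by
    field_simp
    ring
  rw [key]
  exact div_nonneg (sub_nonneg.2 h) (by positivity)

theorem stmt_5_general (β : ℝ) (Δ : ℕ) (hΔ8 : 8 ≤ Δ)
    (hΔ : ((8 : ℝ) ^ β + 2 * (4 : ℝ) ^ β + 6 * (2 : ℝ) ^ β + 7) / (1 + (2 : ℝ) ^ β) ≤ (Δ : ℝ)) :
    1 + (2 : ℝ) ^ (-β) ≤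
      ∑ i ∈ Finset.Icc 1 Δ, ((Δ : ℝ) + 1 - (i : ℝ)) / (((Δ : ℝ) + 1) * (i : ℝ) ^ β) := by
  set a := (2 : ℝ) ^ β
  have ha : 0 < a := Real.rpow_pos_of_pos two_pos β
  have h4 : (4 : ℝ) ^ β = a ^ 2 := by rw [← two_pow_rpow]; norm_num
  have h8 : (8 : ℝ) ^ β = a ^ 3 := by rw [← two_pow_rpow]; norm_num
  rw [h4, h8, div_le_iff₀ (by positivity)] at hΔ
  have hsub : ({1, 2, 4, 8} : Finset ℕ) ⊆ Icc 1 Δ := by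
    intro i hi
    simp only [mem_insert, mem_singleton] at hi
    rw [mem_Icc]
    omega
  refine le_trans ?_ (sum_le_sum_of_subset_of_nonneg hsub
    fun i hi _ => div_mul_rpow_nonneg (mem_Icc.1 hi).2 β)
  rw [Real.rpow_neg zero_le_two]
  refine (one_add_inv_le_of_cubic_le ha (Nat.cast_nonneg Δ) (by linarith)).trans_eq ?_
  rw [sum_insert (by norm_num), sum_insert (by norm_num), sum_insert (by norm_num), sum_singleton]
  norm_num [h4, h8]
  ring

theorem stmt_5 (β : ℝ) (hβ : 2 < β) (Δ : ℕ) (hΔ8 : 8 ≤ Δ)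
    (hΔ : ((8 : ℝ) ^ β + 2 * (4 : ℝ) ^ β + 6 * (2 : ℝ) ^ β + 7) / (1 + (2 : ℝ) ^ β) ≤ (Δ : ℝ)) :
    1 + (2 : ℝ) ^ (-β) ≤
      ∑ i ∈ Finset.Icc 1 Δ, ((Δ : ℝ) + 1 - (i : ℝ)) / (((Δ : ℝ) + 1) * (i : ℝ) ^ β) :=
  stmt_5_general β Δ hΔ8 hΔ
end

section
/- Let β > 2 be a real number. Then there exists a natural number Δ₀ such that for every natural number Δ ≥ Δ₀, (∑_{i=1}^{Δ} i^{−β} − 1 − 2^{−β}) / (∑_{i=1}^{Δ} i^{−(β−1)}) ≥ (ζ(β) − 1 − 2^{−β}) / ζ(β−1), where ζ(s) = ∑_{n=1}^{∞} n^{−s} denotes the Riemann zeta function evaluated at the real number s > 1. -/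
/-!
Write `N = ζ(β) - 1 - 2^{-β}`, `Z = ζ(β - 1)` and let `T_s(Δ) = ∑_{i > Δ} i^{-s}` be the tails.
The right-hand side is `(N - T_β(Δ)) / (Z - T_{β-1}(Δ))`, and after cross-multiplying the claim
becomes `Z · T_β(Δ) ≤ N · T_{β-1}(Δ)`. Termwise `i^{-β} ≤ i^{-(β-1)} / (Δ + 1)` for `i > Δ`, so
`T_β(Δ) ≤ T_{β-1}(Δ) / (Δ + 1)`, and the claim holds as soon as `Δ ≥ Z / N`.
-/

noncomputable def zetaReal (s : ℝ) : ℝ := ∑' n : ℕ, ((n : ℝ) + 1) ^ (-s)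

/-- The tail `∑_{i > Δ} i^{-s}` of `zetaReal s`. -/
noncomputable def zetaTail (s : ℝ) (Δ : ℕ) : ℝ := ∑' n : ℕ, (((n + Δ : ℕ) : ℝ) + 1) ^ (-s)

open Finset

lemma summable_nat_add_one_rpow_neg {s : ℝ} (hs : 1 < s) :
    Summable fun n : ℕ => ((n : ℝ) + 1) ^ (-s) := by
  have h : Summable fun n : ℕ => (n : ℝ) ^ (-s) := Real.summable_nat_rpow.mpr (by linarith)
  exact_mod_cast (summable_nat_add_iff 1).mpr h

lemma summable_zetaTail_terms {s : ℝ} (hs : 1 < s) (Δ : ℕ) :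
    Summable fun n : ℕ => (((n + Δ : ℕ) : ℝ) + 1) ^ (-s) :=
  (summable_nat_add_iff Δ).mpr (summable_nat_add_one_rpow_neg hs)

lemma zetaTail_nonneg (s : ℝ) (Δ : ℕ) : 0 ≤ zetaTail s Δ :=
  tsum_nonneg fun _ => by positivity

lemma sum_Icc_rpow_neg_add_zetaTail {s : ℝ} (hs : 1 < s) (Δ : ℕ) :
    ∑ i ∈ Icc 1 Δ, (i : ℝ) ^ (-s) + zetaTail s Δ = zetaReal s := by
  have hreindex : ∑ i ∈ Icc 1 Δ, (i : ℝ) ^ (-s) = ∑ n ∈ range Δ, ((n : ℝ) + 1) ^ (-s) := by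
    rw [← Ico_add_one_right_eq_Icc, sum_Ico_eq_sum_range]
    simp only [Nat.add_sub_cancel, Nat.cast_add, Nat.cast_one, add_comm]
  rw [hreindex, zetaTail, zetaReal, ← (summable_nat_add_one_rpow_neg hs).sum_add_tsum_nat_add Δ]

lemma sum_Icc_rpow_neg_pos (s : ℝ) {Δ : ℕ} (hΔ : 0 < Δ) : 0 < ∑ i ∈ Icc 1 Δ, (i : ℝ) ^ (-s) :=
  sum_pos (fun i hi => by have := (mem_Icc.mp hi).1; positivity) ⟨1, mem_Icc.mpr ⟨le_rfl, hΔ⟩⟩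

lemma one_add_two_rpow_neg_lt_zetaReal {s : ℝ} (hs : 1 < s) : 1 + (2 : ℝ) ^ (-s) < zetaReal s := by
  have hfirst3 : ∑ n ∈ range 3, ((n : ℝ) + 1) ^ (-s) ≤ zetaReal s :=
    (summable_nat_add_one_rpow_neg hs).sum_le_tsum _ fun _ _ => by positivity
  have h3 : (0 : ℝ) < 3 ^ (-s) := by positivity
  norm_num [sum_range_succ] at hfirst3
  linarith

lemma add_one_mul_zetaTail_add_one_le {s : ℝ} (hs : 1 < s) (Δ : ℕ) :
    ((Δ : ℝ) + 1) * zetaTail (s + 1) Δ ≤ zetaTail s Δ := by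
  rw [← le_div_iff₀' (by positivity), zetaTail, zetaTail, ← tsum_div_const]
  refine (summable_zetaTail_terms (by linarith) Δ).tsum_le_tsum (fun n => ?_)
    ((summable_zetaTail_terms hs Δ).div_const _)
  have hx : (0 : ℝ) < ((n + Δ : ℕ) : ℝ) + 1 := by positivity
  rw [neg_add, Real.rpow_add hx, Real.rpow_neg_one, ← div_eq_mul_inv]
  gcongr
  linarith [(n.cast_nonneg : (0 : ℝ) ≤ n)]

lemma div_le_sub_div_sub {N Z T T' x : ℝ} (hN : 0 < N) (hZ : 0 < Z) (hZT : 0 < Z - T)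
    (hT' : 0 ≤ T') (hZx : Z ≤ N * x) (hxT : x * T' ≤ T) : N / Z ≤ (N - T') / (Z - T) := by
  rw [div_le_div_iff₀ hZ hZT]
  have : Z * T' ≤ N * T := calc
    Z * T' ≤ N * x * T' := mul_le_mul_of_nonneg_right hZx hT'
    _ ≤ N * T := by rw [mul_assoc]; exact mul_le_mul_of_nonneg_left hxT hN.le
  linarith

theorem stmt_7 (β : ℝ) (hβ : 2 < β) :
    ∃ Δ₀ : ℕ, ∀ Δ : ℕ, Δ₀ ≤ Δ →
      (zetaReal β - 1 - (2 : ℝ) ^ (-β)) / zetaReal (β - 1) ≤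
        ((∑ i ∈ Finset.Icc 1 Δ, (i : ℝ) ^ (-β)) - 1 - (2 : ℝ) ^ (-β)) /
          (∑ i ∈ Finset.Icc 1 Δ, (i : ℝ) ^ (-(β - 1))) := by
  have hβ1 : 1 < β - 1 := by linarith
  set N := zetaReal β - 1 - (2 : ℝ) ^ (-β)
  set Z := zetaReal (β - 1)
  have hN : 0 < N := by linarith [one_add_two_rpow_neg_lt_zetaReal (s := β) (by linarith)]
  have hZ : 0 < Z := by
    linarith [one_add_two_rpow_neg_lt_zetaReal hβ1, (by positivity : (0 : ℝ) < 2 ^ (-(β - 1)))]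
  refine ⟨⌈Z / N⌉₊, fun Δ hΔ => ?_⟩
  have hZΔ : Z ≤ N * Δ := (div_le_iff₀' hN).mp (Nat.ceil_le.mp hΔ)
  have hΔpos : 0 < Δ := (Nat.ceil_pos.mpr (div_pos hZ hN)).trans_le hΔ
  have hnum : ∑ i ∈ Icc 1 Δ, (i : ℝ) ^ (-β) - 1 - (2 : ℝ) ^ (-β) = N - zetaTail β Δ := by
    linarith [sum_Icc_rpow_neg_add_zetaTail (s := β) (by linarith) Δ]
  have hden : ∑ i ∈ Icc 1 Δ, (i : ℝ) ^ (-(β - 1)) = Z - zetaTail (β - 1) Δ :=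
    eq_sub_of_add_eq (sum_Icc_rpow_neg_add_zetaTail hβ1 Δ)
  have htail := add_one_mul_zetaTail_add_one_le hβ1 Δ
  rw [sub_add_cancel] at htail
  rw [hnum, hden]
  exact div_le_sub_div_sub hN hZ (hden ▸ sum_Icc_rpow_neg_pos (β - 1) hΔpos)
    (zetaTail_nonneg β Δ) (by linarith) htail
end

section
/- Let N and D be real numbers with D ≥ 0, and let d₁ ≤ d₂ be natural numbers with 1 ≤ d₁ and N − D − d₂ + 1 ≥ 0. Then ((N − D − d₂ + 1)/(N − d₂ + 1))^{d₂} ≤ ((N − D − d₁ + 1)/(N − d₁ + 1))^{d₁}; that is, the function d ↦ ((N − D − d + 1)/(N − d + 1))^{d} is monotone decreasing in d on this range. -/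
theorem stmt_8 (N D : ℝ) (hD : 0 ≤ D) (d₁ d₂ : ℕ) (hd₁ : 1 ≤ d₁) (hd : d₁ ≤ d₂)
    (hN : 0 ≤ N - D - (d₂ : ℝ) + 1) :
    ((N - D - (d₂ : ℝ) + 1) / (N - (d₂ : ℝ) + 1)) ^ d₂ ≤
      ((N - D - (d₁ : ℝ) + 1) / (N - (d₁ : ℝ) + 1)) ^ d₁ := by
  have hcast : (d₁ : ℝ) ≤ (d₂ : ℝ) := by exact_mod_cast hd
  have hden2 : (0 : ℝ) ≤ N - (d₂ : ℝ) + 1 := by linarith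
  have hden1 : (0 : ℝ) ≤ N - (d₁ : ℝ) + 1 := by linarith
  have hnum1 : (0 : ℝ) ≤ N - D - (d₁ : ℝ) + 1 := by linarith
  have hr1 : 0 ≤ (N - D - (d₁ : ℝ) + 1) / (N - (d₁ : ℝ) + 1) := div_nonneg hnum1 hden1
  rcases eq_or_lt_of_le hden2 with h0 | hpos
  · have hnum0 : N - D - (d₂ : ℝ) + 1 = 0 := by linarith
    rw [hnum0, zero_div, zero_pow (by omega), ]
    positivity
  · have hden1' : (0 : ℝ) < N - (d₁ : ℝ) + 1 := by linarith
    have hr21 : (N - D - (d₂ : ℝ) + 1) / (N - (d₂ : ℝ) + 1) ≤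
        (N - D - (d₁ : ℝ) + 1) / (N - (d₁ : ℝ) + 1) := by
      rw [div_le_div_iff₀ hpos hden1']
      nlinarith
    have hr11 : (N - D - (d₁ : ℝ) + 1) / (N - (d₁ : ℝ) + 1) ≤ 1 := by
      rw [div_le_one hden1']; linarith
    calc ((N - D - (d₂ : ℝ) + 1) / (N - (d₂ : ℝ) + 1)) ^ d₂
        ≤ ((N - D - (d₁ : ℝ) + 1) / (N - (d₁ : ℝ) + 1)) ^ d₂ :=
          pow_le_pow_left₀ (div_nonneg hN hden2) hr21 _
      _ ≤ ((N - D - (d₁ : ℝ) + 1) / (N - (d₁ : ℝ) + 1)) ^ d₁ :=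
          pow_le_pow_of_le_one hr1 hr11 hd
end

section
/- Let d ≥ 1 be a natural number and let N, D be real numbers with D > 0 and N ≥ D + d. Then ∑_{j=1}^{d} (D/(N − j)) · ∏_{k=1}^{j−1} (N − D − k)/(N − k) ≥ ((N − d + 1)/N) · (1 − ((N − D − d + 1)/(N − d + 1))^{d}). -/
/-!
Put `x = N - d + 1` and `r = (x - D) / x`. Since `1 - r^d = (D / x) ∑_{i<d} r^i`, the left-hand side
is `(D / N) ∑_{i<d} r^i`. Termwise, `D / (N - j) ≥ D / N`, and each factor `(N - D - k) / (N - k)`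
with `k ≤ d - 1` is at least `r`, because `y ↦ (y - D) / y` is increasing for `y > 0`.
-/

open Finset

lemma sum_Icc_one_pred_eq_sum_range {M : Type*} [AddCommMonoid M] (f : ℕ → M) (d : ℕ) :
    ∑ j ∈ Icc 1 d, f (j - 1) = ∑ i ∈ range d, f i := by
  calc ∑ j ∈ Icc 1 d, f (j - 1) = ∑ j ∈ Ico (0 + 1) (d + 1), f (j - 1) := by
        rw [zero_add, Ico_add_one_right_eq_Icc]
    _ = ∑ i ∈ Ico 0 d, f (i + 1 - 1) := (sum_Ico_add' _ _ _ _).symm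
    _ = ∑ i ∈ range d, f i := by simp only [Nat.add_sub_cancel, range_eq_Ico]

lemma one_sub_sub_div_pow {x : ℝ} (hx : x ≠ 0) (D : ℝ) (d : ℕ) :
    1 - ((x - D) / x) ^ d = D / x * ∑ i ∈ range d, ((x - D) / x) ^ i := by
  rw [← mul_neg_geom_sum]
  congr 1
  field_simp
  ring

lemma sub_div_self_le_sub_div_self {D x y : ℝ} (hD : 0 ≤ D) (hx : 0 < x) (hxy : x ≤ y) :
    (x - D) / x ≤ (y - D) / y := by
  rw [div_le_div_iff₀ hx (hx.trans_le hxy)]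
  nlinarith

lemma pow_le_prod_Icc {r : ℝ} {f : ℕ → ℝ} (m : ℕ) (hr : 0 ≤ r) (hf : ∀ k ∈ Icc 1 m, r ≤ f k) :
    r ^ m ≤ ∏ k ∈ Icc 1 m, f k := by
  calc r ^ m = ∏ _k ∈ Icc 1 m, r := by rw [prod_const, Nat.card_Icc, Nat.add_sub_cancel]
    _ ≤ ∏ k ∈ Icc 1 m, f k := prod_le_prod (fun _ _ => hr) hf

theorem stmt_9_general (d : ℕ) (N D : ℝ) (hD : 0 < D) (hN : D + (d : ℝ) ≤ N) :
    ((N - (d : ℝ) + 1) / N) * (1 - ((N - D - (d : ℝ) + 1) / (N - (d : ℝ) + 1)) ^ d) ≤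
      ∑ j ∈ Finset.Icc 1 d, (D / (N - (j : ℝ))) *
        ∏ k ∈ Finset.Icc 1 (j - 1), (N - D - (k : ℝ)) / (N - (k : ℝ)) := by
  set x : ℝ := N - d + 1
  have hx_pos : 0 < x := by linarith
  have hr : 0 ≤ (x - D) / x := div_nonneg (by linarith) hx_pos.le
  have lhs_eq : x / N * (1 - ((x - D) / x) ^ d)
      = ∑ j ∈ Icc 1 d, D / N * ((x - D) / x) ^ (j - 1) := by
    rw [sum_Icc_one_pred_eq_sum_range (fun i => D / N * ((x - D) / x) ^ i), ← mul_sum,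
      one_sub_sub_div_pow hx_pos.ne', ← mul_assoc]
    field_simp
  rw [show N - D - d + 1 = x - D by ring, lhs_eq]
  refine sum_le_sum fun j hj => ?_
  obtain ⟨-, hj_le⟩ := mem_Icc.mp hj
  have hjd : (j : ℝ) ≤ d := by exact_mod_cast hj_le
  refine mul_le_mul (div_le_div_of_nonneg_left hD.le (by linarith) (by linarith))
    (pow_le_prod_Icc _ hr fun k hk => ?_) (pow_nonneg hr _) (div_nonneg hD.le (by linarith))
  have hkd : (k : ℝ) + 1 ≤ d := by
    obtain ⟨hk_pos, hk_le⟩ := mem_Icc.mp hk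
    have : k + 1 ≤ d := by omega
    exact_mod_cast this
  rw [show N - D - k = (N - k) - D by ring]
  exact sub_div_self_le_sub_div_self hD.le hx_pos (by linarith)

theorem stmt_9 (d : ℕ) (hd : 1 ≤ d) (N D : ℝ) (hD : 0 < D) (hN : D + (d : ℝ) ≤ N) :
    ((N - (d : ℝ) + 1) / N) * (1 - ((N - D - (d : ℝ) + 1) / (N - (d : ℝ) + 1)) ^ d) ≤
      ∑ j ∈ Finset.Icc 1 d, (D / (N - (j : ℝ))) *
        ∏ k ∈ Finset.Icc 1 (j - 1), (N - D - (k : ℝ)) / (N - (k : ℝ)) :=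
  stmt_9_general d N D hD hN
end

section
/- Let G = (V,E) be a finite simple graph and let x be an optimal half-integral fractional vertex cover of G. If v ∈ V satisfies x(v) = 1, then v has a neighbor w ∈ N(v) with x(w) = 0. -/
theorem stmt_12 {V : Type*} [Fintype V] (G : SimpleGraph V)
    (x : V → ℝ) (hx : IsOptimalFVC G x) (hxhalf : IsHalfIntegral x)
    (v : V) (hv : x v = 1) :
    ∃ w ∈ G.neighborSet v, x w = 0 := by
  classical
  by_contra h
  push_neg at h
  -- every neighbor has x w ≥ 1/2
  have hnb : ∀ w, G.Adj v w → 1/2 ≤ x w := by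
    intro w hw
    rcases hxhalf w with h0 | h2 | h1
    · exact absurd h0 (h w hw)
    · exact le_of_eq h2.symm
    · linarith
  set x' : V → ℝ := Function.update x v (1/2) with hx'
  have hFVC : IsFractionalVC G x' := by
    constructor
    · intro u
      by_cases hu : u = v
      · subst hu; simp [hx', Function.update_self]
      · simp [hx', Function.update_of_ne hu]; exact hx.1.1 u
    · intro a b hab
      by_cases ha : a = v
      · subst ha
        have hb : b ≠ a := hab.ne'
        have := hnb b hab
        simp [hx', Function.update_self, Function.update_of_ne hb]
        linarith
      · by_cases hb : b = v
        · subst hb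
          have := hnb a hab.symm
          simp [hx', Function.update_self, Function.update_of_ne ha]
          linarith
        · simp [hx', Function.update_of_ne ha, Function.update_of_ne hb]
          exact hx.1.2 a b hab
  have hle := hx.2 x' hFVC
  have hsum : ∑ u, x' u = (∑ u, x u) - 1/2 := by
    have : ∑ u, x' u = (∑ u, x u) - x v + 1/2 := by
      rw [hx', Finset.sum_update_of_mem (Finset.mem_univ v),
        Finset.sdiff_singleton_eq_erase, Finset.sum_erase_eq_sub (Finset.mem_univ v)]
      ring
    rw [this, hv]; ring
  linarith
end
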